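/- Let D = ℂ(x)[τ] and L₁, L₂ ∈ D. The map Ψ : Hom_D(D/DL₁, D/DL₂) → Hom_ℂ(V(L₂), V(L₁)) sending a D-module homomorphism φ to the ℂ-linear map on solution spaces induced by any operator G with φ(1 + DL₁) = G + DL₂ is well defined and injective. -/

import Mathlib

open Polynomial

noncomputable section

/-- The ring of complex-valued sequences. -/
abbrev CSeq := ℕ → ℂ

/-- The ideal of sequences that are nonzero at only finitely many indices. -/
def finIdeal : Ideal CSeq where
  carrier := {u | (Function.support u).Finite}
  add_mem' := by
    intro u v hu hv
    exact (hu.union hv).subset (Function.support_add _ _)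
  zero_mem' := by simp [Function.support_zero]
  smul_mem' := by
    intro c u hu
    refine hu.subset ?_
    intro x hx
    simp only [Function.mem_support] at hx ⊢
    intro h0
    exact hx (by simp [Pi.smul_apply, smul_eq_mul, h0])

/-- `S = ℂ^ℕ/∼`, sequences modulo those with finite support. -/
abbrev SeqQ := CSeq ⧸ finIdeal

/-- The shift on sequences. -/
def shiftHom : CSeq →+* CSeq where
  toFun u := fun n => u (n + 1)
  map_one' := rfl
  map_mul' _ _ := rfl
  map_zero' := rfl
  map_add' _ _ := rfl

lemma shift_mem (u : CSeq) (hu : u ∈ finIdeal) : shiftHom u ∈ finIdeal := by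
  have : Function.support (shiftHom u) ⊆ (fun n => n + 1) ⁻¹' Function.support u := by
    intro x hx; exact hx
  exact (hu.preimage (fun a _ b _ h => by omega)).subset this

/-- The shift operator `τ` on `S`, as a ring homomorphism. -/
def tauHom : SeqQ →+* SeqQ :=
  Ideal.Quotient.lift finIdeal ((Ideal.Quotient.mk finIdeal).comp shiftHom)
    (fun u hu => by
      show Ideal.Quotient.mk finIdeal (shiftHom u) = 0
      exact Ideal.Quotient.eq_zero_iff_mem.mpr (shift_mem u hu))

/-- The shift operator `τ` on `S`, as a `ℂ`-linear endomorphism. -/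
def tauL : Module.End ℂ SeqQ where
  toFun := tauHom
  map_add' := map_add _
  map_smul' c x := by
    obtain ⟨u, rfl⟩ := Ideal.Quotient.mk_surjective x
    rfl

/-- Evaluation of a rational function along `ℕ` (junk value `0` at poles). -/
def evalRF (f : RatFunc ℂ) : CSeq := fun n => f.eval (RingHom.id ℂ) (n : ℂ)

/-- The image of a rational function in `S`. -/
def embRF (f : RatFunc ℂ) : SeqQ := Ideal.Quotient.mk _ (evalRF f)

/-- Multiplication by (the image in `S` of) a rational function. -/
def mulOp (f : RatFunc ℂ) : Module.End ℂ SeqQ := LinearMap.mulLeft ℂ (embRF f)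

/-- The substitution `x ↦ x + 1` on rational functions. -/
def sigmaRF (f : RatFunc ℂ) : RatFunc ℂ :=
  algebraMap (Polynomial ℂ) (RatFunc ℂ) (f.num.comp (X + 1)) /
    algebraMap (Polynomial ℂ) (RatFunc ℂ) (f.denom.comp (X + 1))

/-- The difference operator `Σ aᵢ τ^i` acting on `S`. -/
def applyOp {n : ℕ} (a : Fin (n + 1) → RatFunc ℂ) : Module.End ℂ SeqQ :=
  ∑ i : Fin (n + 1), mulOp (a i) * tauL ^ (i : ℕ)

/-- The elements of `End(S)` that are difference operators, i.e. members of `D = ℂ(x)[τ]`. -/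
def IsDiffOp (L : Module.End ℂ SeqQ) : Prop :=
  ∃ (n : ℕ) (a : Fin (n + 1) → RatFunc ℂ), L = applyOp a


/-!
Well-definedness: from `L₁ G = Q L₂`, the operator `G` maps `ker L₂` into `ker L₁`.

Injectivity: since `τ^j f = σ^j(f) τ^j` and the leading coefficient of `L₂` is a unit of `ℂ(x)`,
`G - G'` can be divided on the right by `L₂`: `G - G' = Q L₂ + R` with `ord R < m = ord L₂`, and
`R` kills `V(L₂)`. For large `t` the first and last coefficients of `L₂` do not vanish at `t`, so
the companion step carrying the window `(u t, …, u (t+m-1))` of a solution to the next window is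
invertible; hence the windows at time `t` of the solutions started at a fixed time sweep out all
of `ℂ^m`. Applying `R` to the `m` solutions with unit initial windows forces every coefficient of
`R` to vanish at all large `t`, so `R = 0`.
-/

open Filter Fin.NatCast

local notation "mkq" => Ideal.Quotient.mk finIdeal

lemma mk_eq_zero_iff {u : CSeq} : mkq u = 0 ↔ ∀ᶠ t in atTop, u t = 0 := by
  rw [Ideal.Quotient.eq_zero_iff_mem, ← Nat.cofinite_eq_atTop, eventually_cofinite]
  rfl

lemma mk_eq_mk_iff {u v : CSeq} : mkq u = mkq v ↔ ∀ᶠ t in atTop, u t = v t := by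
  rw [← sub_eq_zero, ← map_sub, mk_eq_zero_iff]
  simp only [Pi.sub_apply, sub_eq_zero]

lemma linearMap_ext_mk {A B : Module.End ℂ SeqQ} (h : ∀ u, A (mkq u) = B (mkq u)) : A = B :=
  LinearMap.ext fun x => by
    obtain ⟨u, rfl⟩ := Ideal.Quotient.mk_surjective x
    exact h u

lemma Polynomial.eventually_eval_natCast_ne_zero {p : ℂ[X]} (hp : p ≠ 0) :
    ∀ᶠ t : ℕ in atTop, p.eval (t : ℂ) ≠ 0 := by
  rw [← Nat.cofinite_eq_atTop, eventually_cofinite]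
  simp only [not_not]
  exact (p.finite_setOfPred_isRoot hp).preimage Nat.cast_injective.injOn

lemma eventually_eval_denom_ne_zero (f : RatFunc ℂ) :
    ∀ᶠ t : ℕ in atTop, f.denom.eval₂ (RingHom.id ℂ) (t : ℂ) ≠ 0 :=
  eventually_eval_natCast_ne_zero f.denom_ne_zero

lemma eventually_evalRF_ne_zero {f : RatFunc ℂ} (hf : f ≠ 0) :
    ∀ᶠ t in atTop, evalRF f t ≠ 0 := by
  filter_upwards [eventually_eval_natCast_ne_zero (RatFunc.num_ne_zero hf),
    eventually_eval_denom_ne_zero f] with t hnum hden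
  exact div_ne_zero hnum hden

def embRingHom : RatFunc ℂ →+* SeqQ where
  toFun := embRF
  map_one' := (congrArg mkq (funext fun t => RatFunc.eval_one (RingHom.id ℂ) (t : ℂ))).trans
    (map_one _)
  map_zero' := (congrArg mkq (funext fun t => RatFunc.eval_zero (RingHom.id ℂ) (t : ℂ))).trans
    (map_zero _)
  map_add' f g := (mk_eq_mk_iff.2 <| by
    filter_upwards [eventually_eval_denom_ne_zero f, eventually_eval_denom_ne_zero g]
      with t hf hg using RatFunc.eval_add _ _ hf hg).trans (map_add _ _ _)
  map_mul' f g := (mk_eq_mk_iff.2 <| by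
    filter_upwards [eventually_eval_denom_ne_zero f, eventually_eval_denom_ne_zero g]
      with t hf hg using RatFunc.eval_mul _ _ hf hg).trans (map_mul _ _ _)

def mulOpHom : RatFunc ℂ →+* Module.End ℂ SeqQ :=
  (Algebra.lmul ℂ SeqQ).toRingHom.comp embRingHom

lemma mulOp_zero : mulOp 0 = 0 := map_zero mulOpHom

lemma mulOp_add (f g : RatFunc ℂ) : mulOp (f + g) = mulOp f + mulOp g := map_add mulOpHom f g

lemma mulOp_sub (f g : RatFunc ℂ) : mulOp (f - g) = mulOp f - mulOp g := map_sub mulOpHom f g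

lemma mulOp_mul (f g : RatFunc ℂ) : mulOp (f * g) = mulOp f * mulOp g := map_mul mulOpHom f g

lemma mulOp_mk (f : RatFunc ℂ) (u : CSeq) : mulOp f (mkq u) = mkq (evalRF f * u) :=
  (map_mul mkq _ _).symm

lemma tauL_pow_mk (j : ℕ) (u : CSeq) : (tauL ^ j) (mkq u) = mkq fun t => u (t + j) := by
  induction j generalizing u with
  | zero => rfl
  | succ j ih => rw [pow_succ, Module.End.mul_apply]; exact ih _

lemma sigmaRF_ne_zero {f : RatFunc ℂ} (hf : f ≠ 0) : sigmaRF f ≠ 0 := by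
  have hX : (X + 1 : ℂ[X]) = X + C 1 := by rw [map_one]
  rw [sigmaRF, hX]
  exact div_ne_zero
    (RatFunc.algebraMap_ne_zero (comp_X_add_C_ne_zero_iff.2 (RatFunc.num_ne_zero hf)))
    (RatFunc.algebraMap_ne_zero (comp_X_add_C_ne_zero_iff.2 f.denom_ne_zero))

lemma iterate_sigmaRF_ne_zero {f : RatFunc ℂ} (hf : f ≠ 0) (j : ℕ) : sigmaRF^[j] f ≠ 0 := by
  induction j generalizing f with
  | zero => exact hf
  | succ j ih => exact ih (sigmaRF_ne_zero hf)

lemma eventually_evalRF_sigmaRF (f : RatFunc ℂ) :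
    ∀ᶠ t in atTop, evalRF (sigmaRF f) t = evalRF f (t + 1) := by
  have hden : f.denom.comp (X + C 1) ≠ 0 := comp_X_add_C_ne_zero_iff.2 f.denom_ne_zero
  have hX : (X + 1 : ℂ[X]) = X + C 1 := by rw [map_one]
  have key : sigmaRF f * algebraMap ℂ[X] (RatFunc ℂ) (f.denom.comp (X + C 1)) =
      algebraMap ℂ[X] (RatFunc ℂ) (f.num.comp (X + C 1)) := by
    rw [sigmaRF, hX]
    exact div_mul_cancel₀ _ (RatFunc.algebraMap_ne_zero hden)
  filter_upwards [eventually_eval_denom_ne_zero (sigmaRF f), eventually_eval_natCast_ne_zero hden]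
    with t hσ ht
  have := congrArg (RatFunc.eval (RingHom.id ℂ) (t : ℂ)) key
  rw [RatFunc.eval_mul _ _ hσ (by simp), RatFunc.eval_algebraMap, RatFunc.eval_algebraMap] at this
  simp only [Algebra.algebraMap_self, RingHom.id_apply, eval₂_id, eval_comp, eval_add, eval_X,
    eval_C] at this ht
  change _ = f.num.eval ((t + 1 : ℕ) : ℂ) / f.denom.eval ((t + 1 : ℕ) : ℂ)
  push_cast
  rw [eq_div_iff ht]
  exact this

lemma tauL_mul_mulOp (f : RatFunc ℂ) : tauL * mulOp f = mulOp (sigmaRF f) * tauL :=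
  linearMap_ext_mk fun u => mk_eq_mk_iff.2 <| by
    filter_upwards [eventually_evalRF_sigmaRF f] with t ht
    exact congrArg (· * u (t + 1)) ht.symm

lemma tauL_pow_mul_mulOp (j : ℕ) (f : RatFunc ℂ) :
    tauL ^ j * mulOp f = mulOp (sigmaRF^[j] f) * tauL ^ j := by
  induction j generalizing f with
  | zero => simp
  | succ j ih =>
    rw [pow_succ, Function.iterate_succ_apply, mul_assoc, tauL_mul_mulOp, ← mul_assoc, ih,
      mul_assoc]

def diffOp (c : ℕ → RatFunc ℂ) (k : ℕ) : Module.End ℂ SeqQ :=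
  ∑ i ∈ Finset.range k, mulOp (c i) * tauL ^ i

lemma diffOp_mk (c : ℕ → RatFunc ℂ) (k : ℕ) (u : CSeq) :
    diffOp c k (mkq u) = mkq fun t => ∑ i ∈ Finset.range k, evalRF (c i) t * u (t + i) := by
  simp only [diffOp, LinearMap.coe_sum, Finset.sum_apply, Module.End.mul_apply, tauL_pow_mk,
    mulOp_mk, ← map_sum]
  congr 1
  ext t
  simp only [Finset.sum_apply, Pi.mul_apply]

lemma diffOp_succ (c : ℕ → RatFunc ℂ) (k : ℕ) :
    diffOp c (k + 1) = diffOp c k + mulOp (c k) * tauL ^ k :=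
  Finset.sum_range_succ _ _

lemma diffOp_add (c d : ℕ → RatFunc ℂ) (k : ℕ) : diffOp (c + d) k = diffOp c k + diffOp d k := by
  simp only [diffOp, Pi.add_apply, mulOp_add, add_mul, Finset.sum_add_distrib]

lemma diffOp_sub (c d : ℕ → RatFunc ℂ) (k : ℕ) : diffOp (c - d) k = diffOp c k - diffOp d k := by
  simp only [diffOp, Pi.sub_apply, mulOp_sub, sub_mul, Finset.sum_sub_distrib]

lemma diffOp_zero_right (c : ℕ → RatFunc ℂ) : diffOp c 0 = 0 := Finset.sum_range_zero _

lemma diffOp_truncate {k K : ℕ} (hkK : k ≤ K) (c : ℕ → RatFunc ℂ) :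
    diffOp (fun i => if i < k then c i else 0) K = diffOp c k := by
  induction K, hkK using Nat.le_induction with
  | base => exact Finset.sum_congr rfl fun i hi => by simp [Finset.mem_range.1 hi]
  | succ K hkK ih => rw [diffOp_succ, ih, if_neg (by omega), mulOp_zero, zero_mul, add_zero]

lemma applyOp_eq_diffOp {n : ℕ} (a : Fin (n + 1) → RatFunc ℂ) :
    applyOp a = diffOp (fun i : ℕ => a i) (n + 1) := by
  rw [applyOp, diffOp, ← Fin.sum_univ_eq_sum_range]
  simp only [Fin.cast_val_eq_self]

lemma isDiffOp_diffOp (c : ℕ → RatFunc ℂ) (k : ℕ) : IsDiffOp (diffOp c k) := by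
  refine ⟨k, fun i => if (i : ℕ) < k then c i else 0, ?_⟩
  rw [applyOp, ← diffOp_truncate k.le_succ]
  exact (Fin.sum_univ_eq_sum_range (fun i => mulOp (if i < k then c i else 0) * tauL ^ i) _).symm

lemma isDiffOp_iff {L : Module.End ℂ SeqQ} : IsDiffOp L ↔ ∃ c k, L = diffOp c k := by
  refine ⟨?_, fun ⟨c, k, hL⟩ => hL ▸ isDiffOp_diffOp c k⟩
  rintro ⟨n, a, rfl⟩
  exact ⟨_, _, applyOp_eq_diffOp a⟩

lemma IsDiffOp.add {A B : Module.End ℂ SeqQ} (hA : IsDiffOp A) (hB : IsDiffOp B) :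
    IsDiffOp (A + B) := by
  obtain ⟨c, k, rfl⟩ := isDiffOp_iff.1 hA
  obtain ⟨d, l, rfl⟩ := isDiffOp_iff.1 hB
  rw [← diffOp_truncate (le_max_left k l), ← diffOp_truncate (le_max_right k l), ← diffOp_add]
  exact isDiffOp_diffOp _ _

lemma IsDiffOp.sub {A B : Module.End ℂ SeqQ} (hA : IsDiffOp A) (hB : IsDiffOp B) :
    IsDiffOp (A - B) := by
  obtain ⟨c, k, rfl⟩ := isDiffOp_iff.1 hA
  obtain ⟨d, l, rfl⟩ := isDiffOp_iff.1 hB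
  rw [← diffOp_truncate (le_max_left k l), ← diffOp_truncate (le_max_right k l), ← diffOp_sub]
  exact isDiffOp_diffOp _ _

lemma isDiffOp_mulOp_mul_tauL_pow (g : RatFunc ℂ) (j : ℕ) : IsDiffOp (mulOp g * tauL ^ j) := by
  have h : diffOp (fun i => if i = j then g else 0) (j + 1) = mulOp g * tauL ^ j := by
    rw [diffOp_succ, if_pos rfl, add_eq_right]
    exact Finset.sum_eq_zero fun i hi => by
      dsimp only
      rw [if_neg (Finset.mem_range.1 hi).ne, mulOp_zero, zero_mul]
  exact h ▸ isDiffOp_diffOp _ _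

lemma mulOp_mul_tauL_pow_mul_diffOp (g : RatFunc ℂ) (j : ℕ) (b : ℕ → RatFunc ℂ) (m : ℕ) :
    mulOp g * tauL ^ j * diffOp b m =
      diffOp (fun t => if j ≤ t then g * sigmaRF^[j] (b (t - j)) else 0) (j + m) := by
  rw [diffOp, Finset.mul_sum, diffOp, Finset.sum_range_add,
    Finset.sum_eq_zero (s := Finset.range j) fun t ht => by
    rw [if_neg (by simpa using ht), mulOp_zero, zero_mul], zero_add]
  refine Finset.sum_congr rfl fun i _ => ?_
  rw [if_pos (Nat.le_add_right j i), Nat.add_sub_cancel_left, mulOp_mul, pow_add, mul_assoc,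
    ← mul_assoc (tauL ^ j), tauL_pow_mul_mulOp]
  noncomm_ring

theorem exists_eq_mul_diffOp_add {b : ℕ → RatFunc ℂ} {m : ℕ} (hbm : b m ≠ 0)
    (c : ℕ → RatFunc ℂ) (k : ℕ) :
    ∃ Q r, IsDiffOp Q ∧ diffOp c k = Q * diffOp b (m + 1) + diffOp r m := by
  induction k generalizing c with
  | zero => exact ⟨0, 0, isDiffOp_iff.2 ⟨0, 0, rfl⟩, by simp [diffOp, mulOp_zero]⟩
  | succ k ih =>
    by_cases hkm : k < m
    · exact ⟨0, _, isDiffOp_iff.2 ⟨0, 0, rfl⟩, by rw [zero_mul, zero_add, diffOp_truncate hkm]⟩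
    set j := k - m
    set g := c k / sigmaRF^[j] (b m)
    set e : ℕ → RatFunc ℂ := fun t => if j ≤ t then g * sigmaRF^[j] (b (t - j)) else 0
    have hprod : mulOp g * tauL ^ j * diffOp b (m + 1) = diffOp e (k + 1) := by
      rw [mulOp_mul_tauL_pow_mul_diffOp, show j + (m + 1) = k + 1 by omega]
    have hlead : (c - e) k = 0 := by
      change c k - (if j ≤ k then g * _ else 0) = 0
      rw [if_pos (Nat.sub_le k m), show k - j = m by omega,
        div_mul_cancel₀ _ (iterate_sigmaRF_ne_zero hbm j), sub_self]
    obtain ⟨Q, r, hQ, hQr⟩ := ih (c - e)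
    refine ⟨mulOp g * tauL ^ j + Q, r, (isDiffOp_mulOp_mul_tauL_pow g j).add hQ, ?_⟩
    have hce : diffOp (c - e) k = diffOp c (k + 1) - diffOp e (k + 1) := by
      rw [← diffOp_sub, diffOp_succ, hlead, mulOp_zero, zero_mul, add_zero]
    rw [add_mul, hprod, add_assoc, ← hQr, hce, add_sub_cancel]

section Recurrence

variable (n : ℕ) (β : ℕ → ℕ → ℂ)

/-- The companion step `(u t, …, u (t+n)) ↦ (u (t+1), …, u (t+n+1))` of the recurrence
`∑ i ≤ n+1, β t i * u (t+i) = 0`. -/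
def recStep (t : ℕ) : (Fin (n + 1) → ℂ) →ₗ[ℂ] Fin (n + 1) → ℂ where
  toFun w :=
    Fin.snoc (α := fun _ => ℂ) (Fin.tail w) (-(∑ i : Fin (n + 1), β t i * w i) / β t (n + 1))
  map_add' w w' := by
    ext i
    refine Fin.lastCases ?_ (fun i => ?_) i
    · simp only [Fin.snoc_last, Pi.add_apply, mul_add, Finset.sum_add_distrib]
      ring
    · simp [Fin.tail]
  map_smul' c w := by
    ext i
    refine Fin.lastCases ?_ (fun i => ?_) i
    · simp only [Fin.snoc_last, Pi.smul_apply, smul_eq_mul, RingHom.id_apply,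
        mul_left_comm _ c, ← Finset.mul_sum]
      ring
    · simp [Fin.tail]

lemma recStep_injective {t : ℕ} (h0 : β t 0 ≠ 0) (hn : β t (n + 1) ≠ 0) :
    Function.Injective (recStep n β t) := by
  rw [← LinearMap.ker_eq_bot, LinearMap.ker_eq_bot']
  intro w hw
  have htail : ∀ i : Fin n, w i.succ = 0 := fun i => by
    simpa [recStep, Fin.tail] using congrFun hw i.castSucc
  have hsum : ∑ i : Fin (n + 1), β t i * w i = 0 := by
    simpa [recStep, hn] using congrFun hw (Fin.last n)
  rw [Fin.sum_univ_succ] at hsum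
  simp only [htail, mul_zero, Finset.sum_const_zero, add_zero, Fin.val_zero, mul_eq_zero, h0,
    false_or] at hsum
  funext i
  exact Fin.cases hsum htail i

def recWindow (N : ℕ) : ℕ → (Fin (n + 1) → ℂ) →ₗ[ℂ] Fin (n + 1) → ℂ
  | 0 => LinearMap.id
  | k + 1 => recStep n β (N + k) ∘ₗ recWindow N k

/-- The solution of the recurrence from time `N` on with initial window `v`; its values before `N`
are junk, which is harmless in `SeqQ`. -/
def recSeq (N : ℕ) (v : Fin (n + 1) → ℂ) (t : ℕ) : ℂ := recWindow n β N (t - N) v 0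

lemma recSeq_add_add (N k : ℕ) (v : Fin (n + 1) → ℂ) (i : Fin (n + 1)) :
    recSeq n β N v (N + k + i) = recWindow n β N k v i := by
  induction i using Fin.induction generalizing k with
  | zero => simp [recSeq]
  | succ i ih =>
    rw [Fin.val_succ, show N + k + (i + 1) = N + (k + 1) + i.castSucc by simp; omega, ih]
    simp [recWindow, recStep, Fin.tail]

lemma sum_mul_recSeq_eq_zero (N k : ℕ) (hn : β (N + k) (n + 1) ≠ 0) (v : Fin (n + 1) → ℂ) :
    ∑ i ∈ Finset.range (n + 2), β (N + k) i * recSeq n β N v (N + k + i) = 0 := by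
  rw [Finset.sum_range_succ,
    ← Fin.sum_univ_eq_sum_range (fun i => β (N + k) i * recSeq n β N v (N + k + i))]
  have hlast : recSeq n β N v (N + k + (n + 1)) = recWindow n β N (k + 1) v (Fin.last n) := by
    rw [← recSeq_add_add, Fin.val_last]
    congr 1
    omega
  simp only [recSeq_add_add, hlast, recWindow, LinearMap.comp_apply, recStep, LinearMap.coe_mk,
    AddHom.coe_mk, Fin.snoc_last]
  field_simp
  ring

lemma recWindow_surjective {N : ℕ} (h0 : ∀ t ≥ N, β t 0 ≠ 0) (hn : ∀ t ≥ N, β t (n + 1) ≠ 0)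
    (k : ℕ) : Function.Surjective (recWindow n β N k) := by
  refine LinearMap.injective_iff_surjective.1 ?_
  induction k with
  | zero => exact Function.injective_id
  | succ k ih =>
    rw [recWindow, LinearMap.coe_comp]
    have hNk : N + k ≥ N := Nat.le_add_right N k
    exact (recStep_injective n β (h0 _ hNk) (hn _ hNk)).comp ih

lemma eventually_eq_zero_of_forall_recSeq {N : ℕ} (h0 : ∀ t ≥ N, β t 0 ≠ 0)
    (hn : ∀ t ≥ N, β t (n + 1) ≠ 0) (ρ : ℕ → Fin (n + 1) → ℂ)
    (h : ∀ v, ∀ᶠ t in atTop, ∑ i, ρ t i * recSeq n β N v (t + i) = 0) :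
    ∀ᶠ t in atTop, ρ t = 0 := by
  filter_upwards [eventually_all.2 fun s => h (Pi.single s 1), eventually_ge_atTop N]
    with t hρ hN
  obtain ⟨k, rfl⟩ := Nat.exists_eq_add_of_le hN
  let φ : (Fin (n + 1) → ℂ) →ₗ[ℂ] ℂ := ∑ i, ρ (N + k) i • LinearMap.proj i
  have hφ : φ ∘ₗ recWindow n β N k = 0 := (Pi.basisFun ℂ _).ext fun s => by
    simpa [φ, recSeq_add_add] using hρ s
  funext j
  obtain ⟨v, hv⟩ := recWindow_surjective n β h0 hn k (Pi.single j 1)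
  simpa [φ, hv, Pi.single_apply] using LinearMap.congr_fun hφ v

end Recurrence

theorem diffOp_eq_zero_of_ker_le {b r : ℕ → RatFunc ℂ} {m : ℕ} (hb0 : b 0 ≠ 0) (hbm : b m ≠ 0)
    (h : LinearMap.ker (diffOp b (m + 1)) ≤ LinearMap.ker (diffOp r m)) : diffOp r m = 0 := by
  obtain _ | n := m
  · exact diffOp_zero_right r
  let β : ℕ → ℕ → ℂ := fun t i => evalRF (b i) t
  obtain ⟨N, hN⟩ := eventually_atTop.1
    ((eventually_evalRF_ne_zero hb0).and (eventually_evalRF_ne_zero hbm))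
  have hsol : ∀ v, mkq (recSeq n β N v) ∈ LinearMap.ker (diffOp b (n + 2)) := fun v => by
    rw [LinearMap.mem_ker, diffOp_mk, mk_eq_zero_iff]
    filter_upwards [eventually_ge_atTop N] with t ht
    obtain ⟨k, rfl⟩ := Nat.exists_eq_add_of_le ht
    exact sum_mul_recSeq_eq_zero n β N k (hN _ ht).2 v
  have hr : ∀ᶠ t in atTop, (fun i : Fin (n + 1) => evalRF (r i) t) = 0 :=
    eventually_eq_zero_of_forall_recSeq n β (fun t ht => (hN t ht).1) (fun t ht => (hN t ht).2)
      _ fun v => by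
        have hv := h (hsol v)
        rw [LinearMap.mem_ker, diffOp_mk, mk_eq_zero_iff] at hv
        filter_upwards [hv] with t ht
        rwa [Fin.sum_univ_eq_sum_range (fun i => evalRF (r i) t * recSeq n β N v (t + i))]
  refine Finset.sum_eq_zero fun i hi => ?_
  have hri : r i = 0 := by
    by_contra hri
    obtain ⟨t, hne, hzero⟩ := ((eventually_evalRF_ne_zero hri).and hr).exists
    exact hne (congrFun hzero ⟨i, Finset.mem_range.1 hi⟩)
  rw [hri, mulOp_zero, zero_mul]

theorem stmt4_general (n m : ℕ)
    (a : Fin (n + 1) → RatFunc ℂ) (b : Fin (m + 1) → RatFunc ℂ)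
    (hb0 : b 0 ≠ 0) (hbm : b (Fin.last m) ≠ 0)
    (G G' : Module.End ℂ SeqQ) (hG : IsDiffOp G) (hG' : IsDiffOp G')
    (hhom : ∃ Q : Module.End ℂ SeqQ, IsDiffOp Q ∧ applyOp a * G = Q * applyOp b) :
    (∀ u ∈ LinearMap.ker (applyOp b), G u ∈ LinearMap.ker (applyOp a)) ∧
    ((∀ u ∈ LinearMap.ker (applyOp b), G u = G' u) →
      ∃ Q : Module.End ℂ SeqQ, IsDiffOp Q ∧ G - G' = Q * applyOp b) := by
  refine ⟨fun u hu => ?_, fun hagree => ?_⟩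
  · obtain ⟨Q, -, hQ⟩ := hhom
    rw [LinearMap.mem_ker] at hu ⊢
    rw [← Module.End.mul_apply, hQ, Module.End.mul_apply, hu, map_zero]
  · obtain ⟨c, k, hc⟩ := isDiffOp_iff.1 (hG.sub hG')
    have hb0' : b ((0 : ℕ) : Fin (m + 1)) ≠ 0 := by rwa [Nat.cast_zero]
    have hbm' : b (m : Fin (m + 1)) ≠ 0 := by rwa [Fin.natCast_eq_last]
    rw [applyOp_eq_diffOp] at hagree ⊢
    obtain ⟨Q, r, hQ, hdiv⟩ := exists_eq_mul_diffOp_add (b := fun i : ℕ => b i) hbm' c k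
    have hr : diffOp r m = 0 := diffOp_eq_zero_of_ker_le (b := fun i : ℕ => b i) hb0' hbm'
      fun u hu => by
        have hGu : (G - G') u = 0 := sub_eq_zero.2 (hagree u hu)
        rwa [hc, hdiv, LinearMap.add_apply, Module.End.mul_apply, LinearMap.mem_ker.1 hu,
          map_zero, zero_add] at hGu
    exact ⟨Q, hQ, by rw [hc, hdiv, hr, add_zero]⟩

/-- the map `Ψ : Hom_D(D/DL₁, D/DL₂) → Hom_ℂ(V(L₂), V(L₁))` is well
defined and injective.  A homomorphism `D/DL₁ → D/DL₂` is given by an operator `G`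
with `L₁G ∈ DL₂`; well-definedness says `G` maps `V(L₂)` into `V(L₁)`, and
injectivity says that if two such operators agree on `V(L₂)` then they are
congruent mod `DL₂` (so induce the same homomorphism). -/
theorem stmt4 (n m : ℕ)
    (a : Fin (n + 1) → RatFunc ℂ) (b : Fin (m + 1) → RatFunc ℂ)
    (ha0 : a 0 ≠ 0) (han : a (Fin.last n) ≠ 0)
    (hb0 : b 0 ≠ 0) (hbm : b (Fin.last m) ≠ 0)
    (G G' : Module.End ℂ SeqQ) (hG : IsDiffOp G) (hG' : IsDiffOp G')
    (hhom : ∃ Q : Module.End ℂ SeqQ, IsDiffOp Q ∧ applyOp a * G = Q * applyOp b)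
    (hhom' : ∃ Q : Module.End ℂ SeqQ, IsDiffOp Q ∧ applyOp a * G' = Q * applyOp b) :
    (∀ u ∈ LinearMap.ker (applyOp b), G u ∈ LinearMap.ker (applyOp a)) ∧
    ((∀ u ∈ LinearMap.ker (applyOp b), G u = G' u) →
      ∃ Q : Module.End ℂ SeqQ, IsDiffOp Q ∧ G - G' = Q * applyOp b) :=
  stmt4_general n m a b hb0 hbm G G' hG hG' hhom
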